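/- Let n ≥ 2 and let ψ : ℕ → (0,∞) be a function with ψ(k) → 0 as k → ∞. If the sum ∑_{k=1}^∞ k^{n-2} ψ(k) converges, then the set V(ψ) = {x ∈ [0,1]^n : |q·x| < ψ(|q|) for infinitely many q ∈ ℤ^n \ {0}} has n-dimensional Lebesgue measure 0. -/

import Mathlib

/-!
`V(ψ)` is the limsup of the sets `A_q = {x ∈ [0,1]^n : |q·x| < ψ(|q|)}`, so by Borel–Cantelli
it suffices that `∑_q vol(A_q) < ∞`. If `|q_i| = |q|`, the linear map replacing the `i`-th
coordinate by `q·x` has determinant `q_i` and maps `A_q` into a box of volume `2ψ(|q|)`, so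
`vol(A_q) ≤ 2ψ(|q|)/|q|`. There are at most `(2k+1)^n - (2k-1)^n ≤ 2n(3k)^(n-1)` vectors of
height `k ≥ 1`, so the series is dominated by a multiple of `∑_k k^(n-2) ψ(k)`.
-/

open MeasureTheory

/-- Sup norm (height) of an integer vector. -/
def qnorm {n : ℕ} (q : Fin n → ℤ) : ℕ := Finset.univ.sup fun i => (q i).natAbs

/-- The set `V(ψ)` of points of the unit cube `[0,1]^n` such that
`|q·x| < ψ(|q|)` for infinitely many nonzero integer vectors `q`. -/
def Vset (n : ℕ) (ψ : ℕ → ℝ) : Set (Fin n → ℝ) :=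
  {x | (∀ i, x i ∈ Set.Icc (0 : ℝ) 1) ∧
    {q : Fin n → ℤ | q ≠ 0 ∧ |∑ i, (q i : ℝ) * x i| < ψ (qnorm q)}.Infinite}

open Finset

theorem Matrix.det_one_updateRow {ι R : Type*} [Fintype ι] [DecidableEq ι] [CommRing R]
    (i : ι) (a : ι → R) : ((1 : Matrix ι ι R).updateRow i a).det = a i := by
  have ha : ∑ k, a k • (1 : Matrix ι ι R) k = a := by
    ext j
    simp [Matrix.one_apply]
  simpa [ha] using Matrix.det_updateRow_sum (1 : Matrix ι ι R) i a

theorem volume_cube_inter_abs_dotProduct_lt_le {ι : Type*} [Fintype ι] [DecidableEq ι]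
    (a : ι → ℝ) {i : ι} (hi : a i ≠ 0) (ε : ℝ) :
    volume {x : ι → ℝ | (∀ j, x j ∈ Set.Icc (0 : ℝ) 1) ∧ |a ⬝ᵥ x| < ε}
      ≤ ENNReal.ofReal (2 * ε / |a i|) := by
  set f := Matrix.toLin' ((1 : Matrix ι ι ℝ).updateRow i a)
  have hdet : LinearMap.det f = a i := by
    rw [LinearMap.det_toLin', Matrix.det_one_updateRow]
  set B : Set (ι → ℝ) := Set.univ.pi (Function.update (fun _ ↦ Set.Icc 0 1) i (Set.Ioo (-ε) ε))
  have hsub : {x : ι → ℝ | (∀ j, x j ∈ Set.Icc (0 : ℝ) 1) ∧ |a ⬝ᵥ x| < ε} ⊆ f ⁻¹' B := by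
    rintro x ⟨hx, hax⟩ j -
    rw [Matrix.toLin'_apply, Matrix.updateRow_mulVec, Matrix.one_mulVec]
    rcases eq_or_ne j i with rfl | hj
    · simpa using abs_lt.mp hax
    · simpa [hj] using hx j
  have hB : volume B = ENNReal.ofReal (2 * ε) := by
    rw [volume_pi_pi, Finset.prod_eq_single i (fun j _ hj ↦ by simp [hj]) (by simp)]
    simp [Real.volume_Ioo, two_mul]
  calc _ ≤ volume (f ⁻¹' B) := measure_mono hsub
    _ = ENNReal.ofReal |(a i)⁻¹| * ENNReal.ofReal (2 * ε) := by
      rw [Measure.addHaar_preimage_linearMap _ (hdet ▸ hi), hdet, hB]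
    _ = ENNReal.ofReal (2 * ε / |a i|) := by
      rw [← ENNReal.ofReal_mul (abs_nonneg _), abs_inv, inv_mul_eq_div]

lemma natAbs_le_qnorm {n : ℕ} (q : Fin n → ℤ) (i : Fin n) : (q i).natAbs ≤ qnorm q :=
  le_sup (f := fun i ↦ (q i).natAbs) (mem_univ i)

lemma exists_natAbs_eq_qnorm {n : ℕ} {q : Fin n → ℤ} (hq : q ≠ 0) :
    ∃ i, (q i).natAbs = qnorm q := by
  have : Nonempty (Fin n) := by
    by_contra h
    exact hq (funext fun i ↦ (h ⟨i⟩).elim)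
  obtain ⟨i, -, hi⟩ := exists_mem_eq_sup univ univ_nonempty fun i ↦ (q i).natAbs
  exact ⟨i, hi.symm⟩

lemma qnorm_pos {n : ℕ} {q : Fin n → ℤ} (hq : q ≠ 0) : 0 < qnorm q :=
  pos_iff_ne_zero.mpr fun h ↦
    hq (funext fun i ↦ Int.natAbs_eq_zero.mp (Nat.le_zero.mp (h ▸ natAbs_le_qnorm q i)))

lemma volume_cube_inter_abs_sum_lt_le {n : ℕ} {q : Fin n → ℤ} (hq : q ≠ 0) (ε : ℝ) :
    volume {x : Fin n → ℝ | (∀ i, x i ∈ Set.Icc (0 : ℝ) 1) ∧ |∑ i, (q i : ℝ) * x i| < ε}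
      ≤ ENNReal.ofReal (2 * ε / qnorm q) := by
  obtain ⟨i, hi⟩ := exists_natAbs_eq_qnorm hq
  have hqi : |(q i : ℝ)| = qnorm q := by rw [← hi, Nat.cast_natAbs, Int.cast_abs]
  have hqi0 : (q i : ℝ) ≠ 0 := abs_pos.mp (by rw [hqi]; exact_mod_cast qnorm_pos hq)
  rw [← hqi]
  exact volume_cube_inter_abs_dotProduct_lt_le (fun j ↦ (q j : ℝ)) hqi0 ε

lemma qnorm_le_iff {n k : ℕ} (q : Fin n → ℤ) : qnorm q ≤ k ↔ ∀ i, (q i).natAbs ≤ k := by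
  simp [qnorm]

noncomputable def heightBox (n k : ℕ) : Finset (Fin n → ℤ) :=
  Fintype.piFinset fun _ ↦ Icc (-(k : ℤ)) k

lemma mem_heightBox {n k : ℕ} {q : Fin n → ℤ} : q ∈ heightBox n k ↔ qnorm q ≤ k := by
  simp only [heightBox, Fintype.mem_piFinset, mem_Icc, qnorm_le_iff]
  refine forall_congr' fun i ↦ ?_
  omega

lemma card_heightBox (n k : ℕ) : #(heightBox n k) = (2 * k + 1) ^ n := by
  simp only [heightBox, Fintype.card_piFinset, prod_const, card_univ, Fintype.card_fin,
    Int.card_Icc]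
  congr 1
  omega

lemma qnorm_preimage_singleton {n k : ℕ} (hk : k ≠ 0) :
    qnorm ⁻¹' {k} = (↑(heightBox n k \ heightBox n (k - 1)) : Set (Fin n → ℤ)) := by
  ext q
  simp only [Set.mem_preimage, Set.mem_singleton_iff, coe_sdiff, Set.mem_sdiff, mem_coe,
    mem_heightBox]
  omega

lemma Nat.pow_sub_pow_le {a b : ℕ} (hba : b ≤ a) (n : ℕ) :
    a ^ n - b ^ n ≤ (a - b) * n * a ^ (n - 1) := by
  zify [hba, Nat.pow_le_pow_left hba n]
  calc (a : ℤ) ^ n - b ^ n ≤ |(a : ℤ) ^ n - b ^ n| := le_abs_self _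
    _ ≤ |(a : ℤ) - b| * n * max |(a : ℤ)| |(b : ℤ)| ^ (n - 1) := abs_pow_sub_pow_le _ _ _
    _ = (a - b) * n * a ^ (n - 1) := by
      rw [abs_of_nonneg (by omega), abs_of_nonneg (by omega), abs_of_nonneg (by omega),
        max_eq_left (by omega)]

lemma card_heightBox_sdiff_le (n k : ℕ) :
    #(heightBox n k \ heightBox n (k - 1)) ≤ 2 * n * (2 * k + 1) ^ (n - 1) := by
  have hsub : heightBox n (k - 1) ⊆ heightBox n k := fun q hq ↦ by
    rw [mem_heightBox] at hq ⊢; omega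
  rw [card_sdiff_of_subset hsub, card_heightBox, card_heightBox]
  refine (Nat.pow_sub_pow_le (by omega) n).trans ?_
  gcongr
  omega

lemma tsum_qnorm_preimage_le {n : ℕ} {φ : ℕ → ℝ} (hφ : ∀ k, 0 ≤ φ k) (k : ℕ) :
    ∑' q : (qnorm ⁻¹' {k} : Set (Fin n → ℤ)), ENNReal.ofReal (φ (qnorm q.1) / qnorm q.1)
      ≤ ENNReal.ofReal (2 * n * 3 ^ (n - 1) * ((k : ℝ) ^ (n - 2) * φ k)) := by
  have hconst : ∀ q : (qnorm ⁻¹' {k} : Set (Fin n → ℤ)),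
      ENNReal.ofReal (φ (qnorm q.1) / qnorm q.1) = ENNReal.ofReal (φ k / k) :=
    fun q ↦ by rw [q.2]
  rw [tsum_congr hconst, ENNReal.tsum_set_const]
  rcases eq_or_ne k 0 with rfl | hk
  · simp -- the summand is `φ 0 / 0 = 0`
  have hk1 : (1 : ℝ) ≤ k := by exact_mod_cast Nat.one_le_iff_ne_zero.mpr hk
  set S := heightBox n k \ heightBox n (k - 1)
  have hcount : (#S : ℝ) ≤ 2 * n * 3 ^ (n - 1) * ((k : ℝ) ^ (n - 2) * k) :=
    calc (#S : ℝ) ≤ 2 * n * (2 * k + 1) ^ (n - 1) := by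
          exact_mod_cast card_heightBox_sdiff_le n k
      _ ≤ 2 * n * (3 * k) ^ (n - 1) := by gcongr; linarith
      _ = 2 * n * 3 ^ (n - 1) * (k : ℝ) ^ (n - 1) := by ring
      _ ≤ 2 * n * 3 ^ (n - 1) * ((k : ℝ) ^ (n - 2) * k) := by
          rw [← pow_succ]
          gcongr
          omega
  rw [qnorm_preimage_singleton hk, Set.encard_coe_eq_coe_finsetCard, ENat.toENNReal_coe,
    ← ENNReal.ofReal_natCast, ← ENNReal.ofReal_mul (Nat.cast_nonneg _)]
  refine ENNReal.ofReal_le_ofReal ?_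
  calc (#S : ℝ) * (φ k / k) ≤ 2 * n * 3 ^ (n - 1) * ((k : ℝ) ^ (n - 2) * k) * (φ k / k) := by
        gcongr
        exact div_nonneg (hφ k) (Nat.cast_nonneg k)
    _ = 2 * n * 3 ^ (n - 1) * ((k : ℝ) ^ (n - 2) * φ k) := by
        field_simp

lemma tsum_ofReal_div_qnorm_ne_top {n : ℕ} {φ : ℕ → ℝ} (hφ : ∀ k, 0 ≤ φ k)
    (hsum : Summable fun k : ℕ ↦ (k : ℝ) ^ (n - 2) * φ k) :
    ∑' q : Fin n → ℤ, ENNReal.ofReal (φ (qnorm q) / qnorm q) ≠ ⊤ := by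
  rw [← ENNReal.tsum_fiberwise _ qnorm]
  refine ne_top_of_le_ne_top ?_ (ENNReal.tsum_le_tsum (tsum_qnorm_preimage_le hφ))
  rw [← ENNReal.ofReal_tsum_of_nonneg (fun k ↦ by have := hφ k; positivity) (hsum.mul_left _)]
  exact ENNReal.ofReal_ne_top

theorem stmt0_general (n : ℕ) (ψ : ℕ → ℝ) (hψpos : ∀ k, 0 < ψ k)
    (hconv : Summable fun k : ℕ => (k : ℝ) ^ (n - 2) * ψ k) :
    volume (Vset n ψ) = 0 := by
  set A : (Fin n → ℤ) → Set (Fin n → ℝ) := fun q ↦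
    {x | (∀ i, x i ∈ Set.Icc (0 : ℝ) 1) ∧ (q ≠ 0 ∧ |∑ i, (q i : ℝ) * x i| < ψ (qnorm q))}
  have hV : Vset n ψ ⊆ Filter.limsup A Filter.cofinite := by
    rintro x ⟨hx, hinf⟩
    rw [Filter.mem_limsup_iff_frequently_mem, Filter.frequently_cofinite_iff_infinite]
    exact hinf.mono fun q hq ↦ ⟨hx, hq⟩
  have hA : ∀ q, volume (A q) ≤ ENNReal.ofReal (2 * ψ (qnorm q) / qnorm q) := by
    intro q
    rcases eq_or_ne q 0 with rfl | hq
    · simp [A]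
    · refine (measure_mono ?_).trans (volume_cube_inter_abs_sum_lt_le hq _)
      exact fun x hx ↦ ⟨hx.1, hx.2.2⟩
  have hsum : ∑' q, volume (A q) ≠ ⊤ :=
    ne_top_of_le_ne_top
      (tsum_ofReal_div_qnorm_ne_top (φ := fun k ↦ 2 * ψ k)
        (fun k ↦ by have := hψpos k; positivity) ((hconv.mul_left 2).congr fun k ↦ by ring))
      (ENNReal.tsum_le_tsum hA)
  exact measure_mono_null hV (measure_limsup_cofinite_eq_zero hsum)

theorem stmt0 (n : ℕ) (hn : 2 ≤ n) (ψ : ℕ → ℝ) (hψpos : ∀ k, 0 < ψ k)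
    (hψlim : Filter.Tendsto ψ Filter.atTop (nhds 0))
    (hconv : Summable fun k : ℕ => (k : ℝ) ^ (n - 2) * ψ k) :
    volume (Vset n ψ) = 0 :=
  stmt0_general n ψ hψpos hconv
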